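/- Let G be a finite directed flow network with three terminals a, b, c. Define H to be the star network on vertices {a, b, c, d} with, for each terminal q, an edge from q to d of capacity (q ↛ {a,b,c}∖{q}) and an edge from d to q of capacity ({a,b,c}∖{q} ↛ q), where all min-cut values are measured in G. Then for every partition of {a,b,c} into nonempty sets S, T, the minimum cut value (S ↛ T) in H equals (S ↛ T) in G; consequently H realizes exactly the same external flows as G. -/

import Mathlib

open Finset

/-- Capacity of the cut determined by vertex set `A`: total capacity of edges leaving `A`. -/
def cutCap {V : Type} [Fintype V] [DecidableEq V] (c : V → V → ℝ) (A : Finset V) : ℝ :=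
  ∑ u ∈ A, ∑ v ∈ Aᶜ, c u v

/-- Minimum capacity of a cut with all of `S` on the source side and all of `T` on the sink side. -/
noncomputable def minCut {V : Type} [Fintype V] [DecidableEq V] (c : V → V → ℝ) (S T : Finset V) : ℝ :=
  sInf {x : ℝ | ∃ A : Finset V, S ⊆ A ∧ Disjoint T A ∧ x = cutCap c A}

/-- Net outflow of `f` at vertex `v`. -/
def netOut {V : Type} [Fintype V] (f : V → V → ℝ) (v : V) : ℝ :=
  (∑ w, f v w) - ∑ w, f w v

/-- `f` is an external flow in the network with capacities `c`, terminals `q` and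
terminal net-outflow values `x`. -/
def IsExtFlow {V : Type} [Fintype V] {k : ℕ} (c f : V → V → ℝ) (q : Fin k → V)
    (x : Fin k → ℝ) : Prop :=
  (∀ u v, 0 ≤ f u v ∧ f u v ≤ c u v) ∧
  (∀ v, (∀ i, q i ≠ v) → netOut f v = 0) ∧
  (∀ i, netOut f (q i) = x i)

/-- The star mimicking network on vertices `{a,b,c,d}` (as `Fin 4`, with `d = 3`):
for each terminal `q` an edge `q → d` of capacity `q ↛ rest` and an edge
`d → q` of capacity `rest ↛ q`, measured in `G`. -/
noncomputable def starCap {V : Type} [Fintype V] [DecidableEq V] (c : V → V → ℝ) (t : Fin 3 → V) :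
    Fin 4 → Fin 4 → ℝ := fun u v =>
  if hu : u.val < 3 then
    if v = 3 then
      minCut c {t ⟨u.val, hu⟩} ((Finset.univ.image t) \ {t ⟨u.val, hu⟩})
    else 0
  else if hv : v.val < 3 then
    minCut c ((Finset.univ.image t) \ {t ⟨v.val, hv⟩}) {t ⟨v.val, hv⟩}
  else 0

/-!
A cut of the star separating `S` from its complement either leaves the hub on the sink side,
at cost `∑_{q ∈ S} (q ↛ rest)`, or puts it on the source side, at cost `∑_{q ∉ S} (rest ↛ q)`.
Uniting optimal single-terminal cuts of `G` (and doing the same in the reversed network) shows,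
by submodularity of the cut function, that both sums are at least `(S ↛ Sᶜ)` in `G`; with three
terminals `S` or its complement is a singleton, so one of the two sums is exactly `(S ↛ Sᶜ)`.

Since the two networks have the same terminal min-cuts, Gale's theorem gives the same external
flows. Gale's theorem is proved by minimizing the squared imbalance `∑ v, (netOut f v - b v) ^ 2`
over the compact set of capacity-respecting `f`. At a minimizer no residual edge leads from a
vertex of smaller imbalance to one of larger imbalance (pushing a little flow along it would
decrease the objective), so the edges leaving the set of vertices of negative imbalance are
saturated and those entering it are empty; the cut condition on that set then forces the
imbalance to vanish.
-/

section Cuts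

variable {V : Type} [Fintype V] [DecidableEq V] {c : V → V → ℝ}

lemma cutCap_nonneg (hc : ∀ u v, 0 ≤ c u v) (A : Finset V) : 0 ≤ cutCap c A :=
  sum_nonneg fun _ _ => sum_nonneg fun _ _ => hc _ _

@[simp]
lemma cutCap_empty : cutCap c ∅ = 0 := by
  simp [cutCap]

lemma cutCap_eq_sum_ite (c : V → V → ℝ) (A : Finset V) :
    cutCap c A = ∑ u, ∑ v, if u ∈ A ∧ v ∉ A then c u v else 0 := by
  rw [cutCap, ← sum_subset (subset_univ A) fun u _ hu => by simp [hu]]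
  refine sum_congr rfl fun u hu => ?_
  rw [← sum_subset (subset_univ Aᶜ) fun v _ hv => by simp_all]
  exact sum_congr rfl fun v hv => by simp_all

lemma cutCap_inter_add_cutCap_union_le (hc : ∀ u v, 0 ≤ c u v) (A B : Finset V) :
    cutCap c (A ∩ B) + cutCap c (A ∪ B) ≤ cutCap c A + cutCap c B := by
  simp only [cutCap_eq_sum_ite, ← sum_add_distrib]
  refine sum_le_sum fun u _ => sum_le_sum fun v _ => ?_
  by_cases hua : u ∈ A <;> by_cases hub : u ∈ B <;> by_cases hva : v ∈ A <;>
    by_cases hvb : v ∈ B <;> simp [hua, hub, hva, hvb, hc u v]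

lemma cutCap_union_le (hc : ∀ u v, 0 ≤ c u v) (A B : Finset V) :
    cutCap c (A ∪ B) ≤ cutCap c A + cutCap c B := by
  linarith [cutCap_inter_add_cutCap_union_le hc A B, cutCap_nonneg hc (A ∩ B)]

lemma cutCap_biUnion_le {ι : Type} [DecidableEq ι] (hc : ∀ u v, 0 ≤ c u v) (s : Finset ι)
    (A : ι → Finset V) : cutCap c (s.biUnion A) ≤ ∑ i ∈ s, cutCap c (A i) := by
  induction s using Finset.induction_on with
  | empty => simp
  | insert i s hi ih =>
    rw [biUnion_insert, sum_insert hi]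
    exact (cutCap_union_le hc _ _).trans (by gcongr)

lemma cutCap_transpose (c : V → V → ℝ) (A : Finset V) :
    cutCap (fun u v => c v u) A = cutCap c Aᶜ := by
  rw [cutCap, cutCap, sum_comm, compl_compl]

end Cuts

section MinCut

variable {V : Type} [Fintype V] [DecidableEq V] {c : V → V → ℝ} {S T A : Finset V}

lemma finite_cutCaps (c : V → V → ℝ) (S T : Finset V) :
    {x : ℝ | ∃ A : Finset V, S ⊆ A ∧ Disjoint T A ∧ x = cutCap c A}.Finite :=
  (Set.finite_range (cutCap c)).subset fun _ ⟨A, _, _, hx⟩ => ⟨A, hx.symm⟩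

lemma minCut_le_cutCap (hS : S ⊆ A) (hT : Disjoint T A) : minCut c S T ≤ cutCap c A :=
  csInf_le (finite_cutCaps c S T).bddBelow ⟨A, hS, hT, rfl⟩

lemma exists_cutCap_eq_minCut (hST : Disjoint S T) :
    ∃ A, S ⊆ A ∧ Disjoint T A ∧ cutCap c A = minCut c S T := by
  have hne : {x : ℝ | ∃ A : Finset V, S ⊆ A ∧ Disjoint T A ∧ x = cutCap c A}.Nonempty :=
    ⟨_, Tᶜ, subset_compl_iff_disjoint_right.2 hST, disjoint_compl_right, rfl⟩
  obtain ⟨A, hS, hT, hA⟩ := hne.csInf_mem (finite_cutCaps c S T)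
  exact ⟨A, hS, hT, hA.symm⟩

lemma minCut_nonneg (hc : ∀ u v, 0 ≤ c u v) (S T : Finset V) : 0 ≤ minCut c S T :=
  Real.sInf_nonneg fun _ ⟨A, _, _, hx⟩ => hx ▸ cutCap_nonneg hc A

lemma minCut_empty_left (hc : ∀ u v, 0 ≤ c u v) (T : Finset V) : minCut c ∅ T = 0 :=
  le_antisymm (cutCap_empty (c := c) ▸ minCut_le_cutCap (empty_subset _) (disjoint_empty_right T))
    (minCut_nonneg hc _ _)

lemma minCut_transpose (c : V → V → ℝ) (S T : Finset V) :
    minCut (fun u v => c v u) S T = minCut c T S := by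
  unfold minCut
  congr 1
  ext x
  constructor
  · rintro ⟨A, hS, hT, rfl⟩
    exact ⟨Aᶜ, subset_compl_iff_disjoint_right.2 hT, disjoint_compl_right.mono_left hS,
      cutCap_transpose c A⟩
  · rintro ⟨A, hT, hS, rfl⟩
    refine ⟨Aᶜ, subset_compl_iff_disjoint_right.2 hS, disjoint_compl_right.mono_left hT, ?_⟩
    rw [cutCap_transpose c Aᶜ, compl_compl]

end MinCut

def IsFeasibleFlow {V : Type} (c f : V → V → ℝ) : Prop :=
  ∀ u v, 0 ≤ f u v ∧ f u v ≤ c u v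

lemma isCompact_setOf_isFeasibleFlow {V : Type} (c : V → V → ℝ) :
    IsCompact {f | IsFeasibleFlow c f} := by
  have : {f | IsFeasibleFlow c f} =
      Set.univ.pi fun u => Set.univ.pi fun v => Set.Icc 0 (c u v) := by
    ext f
    simp only [Set.mem_univ_pi, Set.mem_Icc]
    rfl
  rw [this]
  exact isCompact_univ_pi fun u => isCompact_univ_pi fun v => isCompact_Icc

lemma IsFeasibleFlow.add_edge {V : Type} [DecidableEq V] {c f : V → V → ℝ}
    (hf : IsFeasibleFlow c f) {u v : V} {δ : ℝ} (h₀ : 0 ≤ f u v + δ) (h₁ : f u v + δ ≤ c u v) :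
    IsFeasibleFlow c fun a w => f a w + if a = u ∧ w = v then δ else 0 := by
  intro a w
  dsimp only
  split_ifs with h
  · obtain ⟨rfl, rfl⟩ := h
    exact ⟨h₀, h₁⟩
  · simpa using hf a w

section Flows

variable {V : Type} [Fintype V] [DecidableEq V] {c f : V → V → ℝ}

lemma sum_netOut_eq (f : V → V → ℝ) (A : Finset V) :
    ∑ u ∈ A, netOut f u = ∑ u ∈ A, ∑ v ∈ Aᶜ, f u v - ∑ u ∈ A, ∑ v ∈ Aᶜ, f v u := by
  simp only [netOut, sum_sub_distrib, ← sum_add_sum_compl A, sum_add_distrib]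
  rw [sum_comm (s := A) (t := A)]
  ring

lemma sum_netOut_univ (f : V → V → ℝ) : ∑ u, netOut f u = 0 := by
  simpa using sum_netOut_eq f univ

lemma sum_netOut_le_cutCap (hf : IsFeasibleFlow c f) (A : Finset V) :
    ∑ u ∈ A, netOut f u ≤ cutCap c A := by
  rw [sum_netOut_eq]
  have hout : ∑ u ∈ A, ∑ v ∈ Aᶜ, f u v ≤ cutCap c A :=
    sum_le_sum fun u _ => sum_le_sum fun v _ => (hf u v).2
  have hin : 0 ≤ ∑ u ∈ A, ∑ v ∈ Aᶜ, f v u :=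
    sum_nonneg fun u _ => sum_nonneg fun v _ => (hf v u).1
  linarith

lemma sum_netOut_eq_cutCap (A : Finset V) (hout : ∀ u ∈ A, ∀ v ∉ A, f u v = c u v)
    (hin : ∀ u ∈ A, ∀ v ∉ A, f v u = 0) : ∑ u ∈ A, netOut f u = cutCap c A := by
  have hout' : ∑ u ∈ A, ∑ v ∈ Aᶜ, f u v = cutCap c A :=
    sum_congr rfl fun u hu => sum_congr rfl fun v hv => hout u hu v (mem_compl.1 hv)
  have hin' : ∑ u ∈ A, ∑ v ∈ Aᶜ, f v u = 0 :=
    sum_eq_zero fun u hu => sum_eq_zero fun v hv => hin u hu v (mem_compl.1 hv)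
  rw [sum_netOut_eq, hout', hin', sub_zero]

lemma netOut_add_edge (f : V → V → ℝ) (u v : V) (δ : ℝ) :
    netOut (fun a w => f a w + if a = u ∧ w = v then δ else 0)
      = netOut f + Pi.single u δ - Pi.single v δ := by
  ext w
  simp only [netOut, sum_add_distrib, ite_and, sum_ite_eq', sum_ite_irrel, sum_const_zero,
    mem_univ, if_true, Pi.add_apply, Pi.sub_apply, Pi.single_apply]
  ring

lemma sum_sq_eq_of_eq_add_single_sub_single {p q : V → ℝ} {u v : V} (huv : u ≠ v) {δ : ℝ}
    (hpq : p = q + Pi.single u δ - Pi.single v δ) :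
    ∑ w, p w ^ 2 = ∑ w, q w ^ 2 + 2 * δ * (q u - q v + δ) := by
  have hp : ∀ w, p w ^ 2 = q w ^ 2 + (Pi.single u (2 * δ * q u + δ ^ 2) : V → ℝ) w
      + (Pi.single v (-2 * δ * q v + δ ^ 2) : V → ℝ) w := by
    intro w
    by_cases hu : w = u <;> by_cases hv : w = v <;> simp_all <;> ring
  simp only [hp, sum_add_distrib, Finset.sum_pi_single', mem_univ, if_true]
  ring

end Flows

section Feasibility

variable {V : Type} [Fintype V] [DecidableEq V] {c f : V → V → ℝ} {b : V → ℝ}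

lemma le_of_isMinOn_sum_sq {K : Set (V → V → ℝ)}
    (hmin : IsMinOn (fun g => ∑ w, (netOut g w - b w) ^ 2) K f) {u v : V} {ε : ℝ} (hε : 0 < ε)
    (hshift : ∀ δ, 0 < δ → δ ≤ ε → ∃ g ∈ K, netOut g = netOut f + Pi.single u δ - Pi.single v δ) :
    netOut f v - b v ≤ netOut f u - b u := by
  by_contra! hlt
  have huv : u ≠ v := by
    rintro rfl
    exact lt_irrefl _ hlt
  set δ := min ε ((netOut f v - b v - (netOut f u - b u)) / 2)
  have hδ : 0 < δ := lt_min hε (by linarith)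
  obtain ⟨g, hgK, hg⟩ := hshift δ hδ (min_le_left _ _)
  have hsq := sum_sq_eq_of_eq_add_single_sub_single (p := netOut g - b) (q := netOut f - b) huv
    (δ := δ) (by rw [hg]; abel)
  have hle : ∑ w, (netOut f w - b w) ^ 2 ≤ ∑ w, (netOut g w - b w) ^ 2 := hmin hgK
  have hneg : netOut f u - b u - (netOut f v - b v) + δ < 0 := by
    linarith [min_le_right ε ((netOut f v - b v - (netOut f u - b u)) / 2)]
  simp only [Pi.sub_apply] at hsq
  have hdrop : 2 * δ * (netOut f u - b u - (netOut f v - b v) + δ) < 0 :=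
    mul_neg_of_pos_of_neg (by positivity) hneg
  linarith

lemma saturated_of_isMinOn_sum_sq (hf : IsFeasibleFlow c f)
    (hmin : IsMinOn (fun g => ∑ w, (netOut g w - b w) ^ 2) {g | IsFeasibleFlow c g} f) {u v : V}
    (huv : netOut f u - b u < netOut f v - b v) : f u v = c u v ∧ f v u = 0 := by
  constructor
  · by_contra hne
    have hlt : 0 < c u v - f u v := sub_pos.2 (lt_of_le_of_ne (hf u v).2 hne)
    refine huv.not_ge (le_of_isMinOn_sum_sq hmin hlt fun δ hδ hδε => ?_)
    exact ⟨_, hf.add_edge (by linarith [(hf u v).1]) (by linarith), netOut_add_edge f u v δ⟩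
  · by_contra hne
    have hlt : 0 < f v u := lt_of_le_of_ne (hf v u).1 (Ne.symm hne)
    refine huv.not_ge (le_of_isMinOn_sum_sq hmin hlt fun δ hδ hδε => ?_)
    refine ⟨_, hf.add_edge (δ := -δ) (by linarith) (by linarith [(hf v u).2]), ?_⟩
    rw [netOut_add_edge, Pi.single_neg, Pi.single_neg]
    abel

theorem exists_feasibleFlow_iff (hc : ∀ u v, 0 ≤ c u v) (b : V → ℝ) :
    (∃ f, IsFeasibleFlow c f ∧ netOut f = b) ↔
      ∑ v, b v = 0 ∧ ∀ A : Finset V, ∑ v ∈ A, b v ≤ cutCap c A := by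
  constructor
  · rintro ⟨f, hf, rfl⟩
    exact ⟨sum_netOut_univ f, sum_netOut_le_cutCap hf⟩
  rintro ⟨hsum, hcut⟩
  obtain ⟨f, hf, hmin⟩ := (isCompact_setOf_isFeasibleFlow c).exists_isMinOn
    ⟨0, fun u v => ⟨le_rfl, hc u v⟩⟩ (f := fun g => ∑ w, (netOut g w - b w) ^ 2)
    (by unfold netOut; fun_prop)
  have hdev : ∀ w, 0 ≤ netOut f w - b w := by
    by_contra! ⟨w, hw⟩
    set B := univ.filter fun w => netOut f w - b w < 0
    have hflow : ∑ u ∈ B, netOut f u = cutCap c B := by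
      refine sum_netOut_eq_cutCap B (fun u hu v hv => ?_) (fun u hu v hv => ?_) <;>
        simp only [B, mem_filter, mem_univ, true_and, not_lt] at hu hv
      exacts [(saturated_of_isMinOn_sum_sq hf hmin (by linarith)).1,
        (saturated_of_isMinOn_sum_sq hf hmin (by linarith)).2]
    have hneg : ∑ u ∈ B, (netOut f u - b u) < 0 :=
      sum_neg (fun u hu => (mem_filter.1 hu).2) ⟨w, by simpa [B] using hw⟩
    rw [sum_sub_distrib, hflow] at hneg
    linarith [hcut B]
  have htotal : ∑ w, (netOut f w - b w) = 0 := by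
    rw [sum_sub_distrib, sum_netOut_univ, hsum, sub_zero]
  refine ⟨f, hf, funext fun w => ?_⟩
  exact sub_eq_zero.1 ((sum_eq_zero_iff_of_nonneg fun w _ => hdev w).1 htotal w (mem_univ w))

end Feasibility

lemma sum_extend_eq_sum_preimage {V : Type} {k : ℕ} {t : Fin k → V} {x : Fin k → ℝ}
    (ht : Function.Injective t) (A : Finset V) :
    ∑ v ∈ A, Function.extend t x 0 v = ∑ i ∈ A.preimage t ht.injOn, x i := by
  rw [← sum_preimage t A ht.injOn _ fun v _ hv => Function.extend_apply' x (0 : V → ℝ) v hv]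
  exact sum_congr rfl fun i _ => ht.extend_apply x 0 i

section ExternalFlows

variable {V : Type} [Fintype V] [DecidableEq V] {k : ℕ} {c f : V → V → ℝ} {t : Fin k → V}
  {x : Fin k → ℝ}

lemma isExtFlow_iff (ht : Function.Injective t) :
    IsExtFlow c f t x ↔ IsFeasibleFlow c f ∧ netOut f = Function.extend t x 0 := by
  refine and_congr Iff.rfl ⟨fun ⟨hin, hterm⟩ => funext fun v => ?_, fun h => ⟨?_, ?_⟩⟩
  · by_cases hv : ∃ i, t i = v
    · obtain ⟨i, rfl⟩ := hv
      rw [hterm, ht.extend_apply]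
    · rw [Function.extend_apply' _ _ _ hv, hin v (not_exists.1 hv), Pi.zero_apply]
  · intro v hv
    rw [h, Function.extend_apply' _ _ _ (not_exists.2 hv), Pi.zero_apply]
  · intro i
    rw [h, ht.extend_apply]

lemma forall_sum_extend_le_cutCap_iff (ht : Function.Injective t) :
    (∀ A : Finset V, ∑ v ∈ A, Function.extend t x 0 v ≤ cutCap c A) ↔
      ∀ S : Finset (Fin k), ∑ i ∈ S, x i ≤ minCut c (S.image t) (Sᶜ.image t) := by
  simp only [sum_extend_eq_sum_preimage ht]
  constructor
  · intro h S
    obtain ⟨A, hS, hT, hA⟩ :=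
      exists_cutCap_eq_minCut (c := c) ((disjoint_image ht).2 (disjoint_compl_right (a := S)))
    have hpre : A.preimage t ht.injOn = S := by
      ext i
      rw [mem_preimage]
      refine ⟨fun hi => ?_, fun hi => hS (mem_image_of_mem t hi)⟩
      by_contra hiS
      exact disjoint_left.1 hT (mem_image_of_mem t (mem_compl.2 hiS)) hi
    rw [← hA, ← hpre]
    exact h A
  · intro h A
    refine (h _).trans (minCut_le_cutCap ?_ ?_)
    · intro v hv
      obtain ⟨i, hi, rfl⟩ := mem_image.1 hv
      exact mem_preimage.1 hi
    · refine disjoint_left.2 fun v hv hvA => ?_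
      obtain ⟨i, hi, rfl⟩ := mem_image.1 hv
      exact mem_compl.1 hi (mem_preimage.2 hvA)

theorem exists_isExtFlow_iff (hc : ∀ u v, 0 ≤ c u v) (ht : Function.Injective t) :
    (∃ f, IsExtFlow c f t x) ↔
      ∑ i, x i = 0 ∧ ∀ S : Finset (Fin k), ∑ i ∈ S, x i ≤ minCut c (S.image t) (Sᶜ.image t) := by
  simp only [isExtFlow_iff ht]
  rw [exists_feasibleFlow_iff hc, forall_sum_extend_le_cutCap_iff ht,
    sum_extend_eq_sum_preimage ht, preimage_univ]

end ExternalFlows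

section TerminalCuts

variable {V : Type} [Fintype V] [DecidableEq V] {k : ℕ} {c : V → V → ℝ} {t : Fin k → V}

lemma minCut_le_sum_minCut_singleton (hc : ∀ u v, 0 ≤ c u v) (ht : Function.Injective t)
    (S : Finset (Fin k)) :
    minCut c (S.image t) (Sᶜ.image t) ≤ ∑ i ∈ S, minCut c {t i} (univ.image t \ {t i}) := by
  have hdisj : ∀ i, Disjoint {t i} (univ.image t \ {t i}) := fun i => by simp
  choose A hA hAT hAcap using fun i => exists_cutCap_eq_minCut (c := c) (hdisj i)
  calc minCut c (S.image t) (Sᶜ.image t) ≤ cutCap c (S.biUnion A) := minCut_le_cutCap ?_ ?_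
    _ ≤ ∑ i ∈ S, cutCap c (A i) := cutCap_biUnion_le hc S A
    _ = _ := sum_congr rfl fun i _ => hAcap i
  · intro v hv
    obtain ⟨i, hi, rfl⟩ := mem_image.1 hv
    exact mem_biUnion.2 ⟨i, hi, hA i (mem_singleton_self _)⟩
  · refine disjoint_left.2 fun v hv hvA => ?_
    obtain ⟨j, hj, rfl⟩ := mem_image.1 hv
    obtain ⟨i, hi, hji⟩ := mem_biUnion.1 hvA
    have hne : t j ≠ t i := ht.ne fun h => mem_compl.1 hj (h ▸ hi)
    exact disjoint_left.1 (hAT i) (by simpa using hne) hji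

lemma minCut_le_sum_minCut_singleton_right (hc : ∀ u v, 0 ≤ c u v) (ht : Function.Injective t)
    (S : Finset (Fin k)) :
    minCut c (S.image t) (Sᶜ.image t) ≤ ∑ i ∈ Sᶜ, minCut c (univ.image t \ {t i}) {t i} := by
  simpa only [minCut_transpose, compl_compl] using
    minCut_le_sum_minCut_singleton (c := fun u v => c v u) (fun u v => hc v u) ht Sᶜ

lemma sum_minCut_singleton_eq_of_card_le_one (hc : ∀ u v, 0 ≤ c u v)
    (ht : Function.Injective t) {S : Finset (Fin k)} (hS : #S ≤ 1) :
    ∑ i ∈ S, minCut c {t i} (univ.image t \ {t i}) = minCut c (S.image t) (Sᶜ.image t) := by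
  rcases S.eq_empty_or_nonempty with rfl | hne
  · rw [sum_empty, image_empty, minCut_empty_left hc]
  · obtain ⟨i, rfl⟩ := card_eq_one.1 (le_antisymm hS hne.card_pos)
    rw [sum_singleton, image_singleton, compl_eq_univ_sdiff, image_sdiff _ _ ht, image_singleton]

lemma sum_minCut_singleton_right_eq_of_card_le_one (hc : ∀ u v, 0 ≤ c u v)
    (ht : Function.Injective t) {S : Finset (Fin k)} (hS : #Sᶜ ≤ 1) :
    ∑ i ∈ Sᶜ, minCut c (univ.image t \ {t i}) {t i} = minCut c (S.image t) (Sᶜ.image t) := by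
  simpa only [minCut_transpose, compl_compl] using
    sum_minCut_singleton_eq_of_card_le_one (c := fun u v => c v u) (fun u v => hc v u) ht hS

lemma minCut_eq_min_of_fin_three (hc : ∀ u v, 0 ≤ c u v) {t : Fin 3 → V}
    (ht : Function.Injective t) (S : Finset (Fin 3)) :
    minCut c (S.image t) (Sᶜ.image t) =
      min (∑ i ∈ S, minCut c {t i} (univ.image t \ {t i}))
        (∑ i ∈ Sᶜ, minCut c (univ.image t \ {t i}) {t i}) := by
  refine le_antisymm (le_min (minCut_le_sum_minCut_singleton hc ht S)
    (minCut_le_sum_minCut_singleton_right hc ht S)) ?_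
  have hcard : #S ≤ 1 ∨ #Sᶜ ≤ 1 := by
    have hcompl : #Sᶜ = 3 - #S := by simpa using card_compl S
    have hle : #S ≤ 3 := by simpa using card_le_univ S
    omega
  rcases hcard with hS | hS
  · exact (min_le_left _ _).trans (sum_minCut_singleton_eq_of_card_le_one hc ht hS).le
  · exact (min_le_right _ _).trans (sum_minCut_singleton_right_eq_of_card_le_one hc ht hS).le

end TerminalCuts

section Star

variable {V : Type} [Fintype V] [DecidableEq V] {c : V → V → ℝ} {h : V} {A : Finset V}

lemma cutCap_eq_sum_of_hub_not_mem (hstar : ∀ u v, u ≠ h → v ≠ h → c u v = 0) (hA : h ∉ A) :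
    cutCap c A = ∑ u ∈ A, c u h :=
  sum_congr rfl fun u hu => sum_eq_single_of_mem h (mem_compl.2 hA) fun v _ hvh =>
    hstar u v (ne_of_mem_of_not_mem hu hA) hvh

lemma cutCap_eq_sum_of_hub_mem (hstar : ∀ u v, u ≠ h → v ≠ h → c u v = 0) (hA : h ∈ A) :
    cutCap c A = ∑ v ∈ Aᶜ, c h v :=
  sum_eq_single_of_mem h hA fun u _ huh => sum_eq_zero fun v hv =>
    hstar u v huh (ne_of_mem_of_not_mem hA (mem_compl.1 hv)).symm

end Star

lemma eq_or_eq_insert_last_of_separates {k : ℕ} {S : Finset (Fin k)} {A : Finset (Fin (k + 1))}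
    (hS : S.image Fin.castSucc ⊆ A) (hT : Disjoint (Sᶜ.image Fin.castSucc) A) :
    A = S.image Fin.castSucc ∨ A = insert (Fin.last k) (S.image Fin.castSucc) := by
  have hmem : ∀ i, Fin.castSucc i ∈ A ↔ i ∈ S := fun i =>
    ⟨fun hi => by_contra fun hiS => disjoint_left.1 hT (mem_image_of_mem _ (mem_compl.2 hiS)) hi,
      fun hi => hS (mem_image_of_mem _ hi)⟩
  by_cases hl : Fin.last k ∈ A
  · right
    ext u
    cases u using Fin.lastCases <;> simp [hl, hmem]
  · left
    ext u
    cases u using Fin.lastCases <;> simp [hl, hmem]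

lemma compl_insert_last_image_castSucc {k : ℕ} (S : Finset (Fin k)) :
    (insert (Fin.last k) (S.image Fin.castSucc))ᶜ = Sᶜ.image Fin.castSucc := by
  ext u
  cases u using Fin.lastCases <;> simp

section StarCap

variable {V : Type} [Fintype V] [DecidableEq V] (c : V → V → ℝ) (t : Fin 3 → V)

lemma starCap_eq_zero_of_ne_last {u v : Fin 4} (hu : u ≠ Fin.last 3) (hv : v ≠ Fin.last 3) :
    starCap c t u v = 0 := by
  have hu' : u.val < 3 := Fin.val_lt_last hu
  have hv' : v ≠ 3 := hv
  simp [starCap, hu', hv']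

lemma minCut_starCap (S : Finset (Fin 3)) :
    minCut (starCap c t) (S.image Fin.castSucc) (Sᶜ.image Fin.castSucc) =
      min (∑ i ∈ S, minCut c {t i} (univ.image t \ {t i}))
        (∑ i ∈ Sᶜ, minCut c (univ.image t \ {t i}) {t i}) := by
  have hstar : ∀ u v, u ≠ Fin.last 3 → v ≠ Fin.last 3 → starCap c t u v = 0 :=
    fun _ _ => starCap_eq_zero_of_ne_last c t
  have hsource : cutCap (starCap c t) (S.image Fin.castSucc) =
      ∑ i ∈ S, minCut c {t i} (univ.image t \ {t i}) := by
    have hlast : Fin.last 3 ∉ S.image Fin.castSucc := by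
      simp only [mem_image, not_exists, not_and]
      exact fun i _ => Fin.castSucc_ne_last i
    rw [cutCap_eq_sum_of_hub_not_mem hstar hlast,
      sum_image fun i _ j _ hij => Fin.castSucc_injective 3 hij]
    simp [starCap]
  have hsink : cutCap (starCap c t) (insert (Fin.last 3) (S.image Fin.castSucc)) =
      ∑ i ∈ Sᶜ, minCut c (univ.image t \ {t i}) {t i} := by
    rw [cutCap_eq_sum_of_hub_mem hstar (mem_insert_self _ _), compl_insert_last_image_castSucc,
      sum_image fun i _ j _ hij => Fin.castSucc_injective 3 hij]
    simp [starCap]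
  have hS : S.image Fin.castSucc ⊆ insert (Fin.last 3) (S.image Fin.castSucc) := subset_insert _ _
  have hT : Disjoint (Sᶜ.image Fin.castSucc) (S.image Fin.castSucc) :=
    (disjoint_image (Fin.castSucc_injective 3)).2 disjoint_compl_left
  have hT' : Disjoint (Sᶜ.image Fin.castSucc) (insert (Fin.last 3) (S.image Fin.castSucc)) := by
    rw [← compl_insert_last_image_castSucc]
    exact disjoint_compl_left
  refine le_antisymm (le_min (hsource ▸ minCut_le_cutCap subset_rfl hT)
    (hsink ▸ minCut_le_cutCap hS hT')) ?_
  obtain ⟨A, hSA, hTA, hA⟩ := exists_cutCap_eq_minCut (c := starCap c t) hT.symm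
  rcases eq_or_eq_insert_last_of_separates hSA hTA with rfl | rfl
  · exact hA ▸ hsource ▸ min_le_left _ _
  · exact hA ▸ hsink ▸ min_le_right _ _

lemma starCap_nonneg (hc : ∀ u v, 0 ≤ c u v) (u v : Fin 4) : 0 ≤ starCap c t u v := by
  unfold starCap
  split_ifs <;> first | exact le_rfl | exact minCut_nonneg hc _ _

end StarCap

theorem stmt5 {V : Type} [Fintype V] [DecidableEq V] (c : V → V → ℝ)
    (hc : ∀ u v, 0 ≤ c u v) (t : Fin 3 → V) (ht : Function.Injective t) :
    (∀ S : Finset (Fin 3), S.Nonempty → S ≠ Finset.univ →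
      minCut (starCap c t) (S.image Fin.castSucc) (Sᶜ.image Fin.castSucc) =
        minCut c (S.image t) (Sᶜ.image t)) ∧
    (∀ x : Fin 3 → ℝ,
      (∃ f, IsExtFlow c f t x) ↔ ∃ g, IsExtFlow (starCap c t) g Fin.castSucc x) := by
  have hcuts : ∀ S : Finset (Fin 3),
      minCut (starCap c t) (S.image Fin.castSucc) (Sᶜ.image Fin.castSucc) =
        minCut c (S.image t) (Sᶜ.image t) := fun S => by
    rw [minCut_starCap, minCut_eq_min_of_fin_three hc ht]
  refine ⟨fun S _ _ => hcuts S, fun x => ?_⟩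
  rw [exists_isExtFlow_iff hc ht,
    exists_isExtFlow_iff (starCap_nonneg c t hc) (Fin.castSucc_injective 3)]
  simp only [hcuts]
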